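/- arXiv:2210.11217 — 10 statements merged into one kernel-verified Lean document; each statement's English description precedes it below -/
import Mathlib

section
/- If a case base CB is consistent, then the classifier f on all fact situations defined by f(s) = x (for x ∈ {0,1}) whenever there exists a precedent (s', X, x) ∈ CB with X ⊆ s ∩ Atm₀ˣ and s ∩ Atm₀^(x̄) ⊆ s' ∩ Atm₀^(x̄), and f(s) = ? otherwise, is well-defined (i.e., no fact situation is assigned both 0 and 1). -/
variable {α : Type*} [DecidableEq α]

/-- `side Plt Dfd x` is the set of factors favoring outcome `x`
(`true` = plaintiff wins, `false` = defendant wins). -/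
def side (Plt Dfd : Finset α) : Bool → Finset α := fun x => if x then Plt else Dfd

/-- A precedent is a triple `(s, X, x)`. A case base is a set of precedents. -/
abbrev CaseBase (α : Type*) := Set (Finset α × Finset α × Bool)

/-- `prefLt Plt Dfd CB x Y' Y` : reason `Y'` (for `!x`) is less preferred than
reason `Y` (for `x`) according to some precedent in `CB`. -/
def prefLt (Plt Dfd : Finset α) (CB : CaseBase α) (x : Bool) (Y' Y : Finset α) : Prop :=
  ∃ c ∈ CB, c.2.2 = x ∧ Y' ⊆ c.1 ∩ side Plt Dfd (!x) ∧ c.2.1 ⊆ Y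

/-- Horty consistency of a case base. -/
def Consistent (Plt Dfd : Finset α) (CB : CaseBase α) : Prop :=
  ¬ ∃ (x : Bool) (Y Y' : Finset α), Y ⊆ side Plt Dfd x ∧ Y' ⊆ side Plt Dfd (!x) ∧
      prefLt Plt Dfd CB x Y' Y ∧ prefLt Plt Dfd CB (!x) Y Y'

/-- Two-way monotonicity of a classifier. -/
def TwoMon (Plt Dfd : Finset α) (f : Finset α → Option Bool) : Prop :=
  ∀ (x : Bool) (A B A' B' : Finset α), A ⊆ side Plt Dfd x → B ⊆ side Plt Dfd (!x) →
    f (A ∪ B) = some x → A ⊆ A' → A' ⊆ side Plt Dfd x → B' ⊆ B →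
    f (A' ∪ B') = some x

/-- Every precedent `(s, X, x)` has `s ⊆ Atm₀` and reason `X ⊆ s ∩ Atm₀ˣ`. -/
def WellFormed (Plt Dfd : Finset α) (CB : CaseBase α) : Prop :=
  ∀ c ∈ CB, c.1 ⊆ Plt ∪ Dfd ∧ c.2.1 ⊆ c.1 ∩ side Plt Dfd c.2.2

/-- `s` qualifies for outcome `x` via the classifier constructed from `CB`. -/
def Qualifies (Plt Dfd : Finset α) (CB : CaseBase α) (s : Finset α) (x : Bool) : Prop :=
  ∃ c ∈ CB, c.2.2 = x ∧ c.2.1 ⊆ s ∩ side Plt Dfd x ∧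
    s ∩ side Plt Dfd (!x) ⊆ c.1 ∩ side Plt Dfd (!x)

/-- `f` realizes case base `CB` (reason-model translation). -/
def Realizes (Plt Dfd : Finset α) (f : Finset α → Option Bool) (CB : CaseBase α) : Prop :=
  ∀ c ∈ CB, f (c.2.1 ∪ (c.1 ∩ side Plt Dfd (!c.2.2))) = some c.2.2

theorem stmt0 (Plt Dfd : Finset α) (hd : Disjoint Plt Dfd) (CB : CaseBase α)
    (hwf : WellFormed Plt Dfd CB) (hcons : Consistent Plt Dfd CB) :
    ∀ s : Finset α, s ⊆ Plt ∪ Dfd →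
      ¬ (Qualifies Plt Dfd CB s true ∧ Qualifies Plt Dfd CB s false) := by
  rintro s hs ⟨⟨c1, hc1, hx1, hX1, hs1⟩, ⟨c2, hc2, hx2, hX2, hs2⟩⟩
  exact hcons ⟨true, s ∩ side Plt Dfd true, s ∩ side Plt Dfd (!true),
    Finset.inter_subset_right, Finset.inter_subset_right,
    ⟨c1, hc1, hx1, hs1, hX1⟩, ⟨c2, hc2, hx2, hs2, hX2⟩⟩
end

section
/- A case base CB for the result model is consistent if and only if there exists a total classifier f : 2^Atm₀ → {0,1,?} satisfying two-way monotonicity such that f(s) = x for every (s, s ∩ Atm₀ˣ, x) ∈ CB. -/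
variable {α : Type*} [DecidableEq α]

lemma side_union_eq (Plt Dfd : Finset α) (x : Bool) :
    side Plt Dfd x ∪ side Plt Dfd (!x) = Plt ∪ Dfd := by
  cases x <;> simp [side, Finset.union_comm]

lemma side_disjoint {Plt Dfd : Finset α} (hd : Disjoint Plt Dfd) (x : Bool) :
    Disjoint (side Plt Dfd x) (side Plt Dfd (!x)) := by
  cases x <;> simp [side]
  · exact hd.symm
  · exact hd

lemma noconf {Plt Dfd : Finset α} {CB : CaseBase α} (hc : Consistent Plt Dfd CB)
    (s : Finset α) (h1 : Qualifies Plt Dfd CB s true)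
    (h2 : Qualifies Plt Dfd CB s false) : False := by
  obtain ⟨c1, hc1, e1, ha1, hb1⟩ := h1
  obtain ⟨c2, hc2, e2, ha2, hb2⟩ := h2
  refine hc ⟨true, s ∩ Plt, s ∩ Dfd, ?_, ?_, ?_, ?_⟩
  · simp [side]
  · simp [side]
  · exact ⟨c1, hc1, e1, by simpa [side] using hb1, by simpa [side] using ha1⟩
  · exact ⟨c2, hc2, e2, by simpa [side] using hb2, by simpa [side] using ha2⟩

theorem stmt4 (Plt Dfd : Finset α) (hd : Disjoint Plt Dfd) (CB : CaseBase α)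
    (hres : ∀ c ∈ CB, c.1 ⊆ Plt ∪ Dfd ∧ c.2.1 = c.1 ∩ side Plt Dfd c.2.2) :
    Consistent Plt Dfd CB ↔
      ∃ f : Finset α → Option Bool, TwoMon Plt Dfd f ∧
        ∀ c ∈ CB, f c.1 = some c.2.2 := by
  classical
  constructor
  · intro hc
    set f : Finset α → Option Bool := fun s =>
      if Qualifies Plt Dfd CB s true then some true
      else if Qualifies Plt Dfd CB s false then some false else none with hf
    have fval : ∀ s x, Qualifies Plt Dfd CB s x → f s = some x := by
      intro s x hq
      cases x with
      | true => simp [hf, hq]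
      | false =>
        have : ¬ Qualifies Plt Dfd CB s true := fun h => noconf hc s h hq
        simp [hf, this, hq]
    have fval' : ∀ s x, f s = some x → Qualifies Plt Dfd CB s x := by
      intro s x h
      by_cases h1 : Qualifies Plt Dfd CB s true
      · simp [hf, h1] at h; subst h; exact h1
      · by_cases h2 : Qualifies Plt Dfd CB s false
        · simp [hf, h1, h2] at h; subst h; exact h2
        · simp [hf, h1, h2] at h
    refine ⟨f, ?_, ?_⟩
    · intro x A B A' B' hA hB hAB hAA' hA' hB'
      have hq := fval' _ _ hAB
      obtain ⟨c, hcCB, ex, hX, hS⟩ := hq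
      -- compute intersections
      have hABx : (A ∪ B) ∩ side Plt Dfd x = A := by
        rw [Finset.union_inter_distrib_right]
        rw [Finset.inter_eq_left.2 hA,
          Finset.disjoint_iff_inter_eq_empty.mp
            ((side_disjoint hd x).symm.mono_left hB), Finset.union_empty]
      have hABnx : (A ∪ B) ∩ side Plt Dfd (!x) = B := by
        rw [Finset.union_inter_distrib_right]
        rw [Finset.inter_eq_left.2 hB,
          Finset.disjoint_iff_inter_eq_empty.mp
            ((side_disjoint hd x).mono_left hA), Finset.empty_union]
      have hA'B'x : (A' ∪ B') ∩ side Plt Dfd x = A' := by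
        rw [Finset.union_inter_distrib_right]
        rw [Finset.inter_eq_left.2 hA',
          Finset.disjoint_iff_inter_eq_empty.mp
            ((side_disjoint hd x).symm.mono_left (hB'.trans hB)), Finset.union_empty]
      have hA'B'nx : (A' ∪ B') ∩ side Plt Dfd (!x) = B' := by
        rw [Finset.union_inter_distrib_right]
        rw [Finset.inter_eq_left.2 (hB'.trans hB),
          Finset.disjoint_iff_inter_eq_empty.mp
            ((side_disjoint hd x).mono_left hA'), Finset.empty_union]
      apply fval
      refine ⟨c, hcCB, ex, ?_, ?_⟩
      · rw [hA'B'x]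
        exact (hABx ▸ hX).trans hAA'
      · rw [hA'B'nx]
        exact hB'.trans (hABnx ▸ hS)
    · intro c hcCB
      apply fval
      refine ⟨c, hcCB, rfl, ?_, subset_rfl⟩
      rw [(hres c hcCB).2]
  · rintro ⟨f, hmon, hfCB⟩ ⟨x, Y, Y', hY, hY', ⟨c, hcCB, ex, hY'c, hcY⟩, ⟨c', hc'CB, ex', hYc', hc'Y'⟩⟩
    obtain ⟨hc1sub, hc1eq⟩ := hres c hcCB
    obtain ⟨hc'1sub, hc'1eq⟩ := hres c' hc'CB
    have hsplit : c.1 = (c.1 ∩ side Plt Dfd x) ∪ (c.1 ∩ side Plt Dfd (!x)) := by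
      rw [← Finset.inter_union_distrib_left, side_union_eq,
        Finset.inter_eq_left.2 hc1sub]
    have hsplit' : c'.1 = (c'.1 ∩ side Plt Dfd (!x)) ∪ (c'.1 ∩ side Plt Dfd x) := by
      rw [← Finset.inter_union_distrib_left, Finset.union_comm, side_union_eq,
        Finset.inter_eq_left.2 hc'1sub]
    have hfc : f ((c.1 ∩ side Plt Dfd x) ∪ (c.1 ∩ side Plt Dfd (!x))) = some x := by
      rw [← hsplit]
      exact ex ▸ hfCB c hcCB
    have hfc' : f ((c'.1 ∩ side Plt Dfd (!x)) ∪ (c'.1 ∩ side Plt Dfd x)) = some (!x) := by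
      rw [← hsplit']
      exact ex' ▸ hfCB c' hc'CB
    have h1 : f (Y ∪ Y') = some x := by
      apply hmon x _ _ _ _ Finset.inter_subset_right Finset.inter_subset_right hfc
        ?_ hY hY'c
      rw [← ex, ← hc1eq]
      exact hcY
    have h2 : f (Y' ∪ Y) = some (!x) := by
      apply hmon (!x) _ _ _ _ Finset.inter_subset_right ?_ hfc' ?_ hY' ?_
      · rw [Bool.not_not]; exact Finset.inter_subset_right
      · rw [← ex', ← hc'1eq]
        exact hc'Y'
      · simpa using hYc'
    rw [Finset.union_comm] at h2
    rw [h1] at h2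
    simp at h2
end

section
/- Let CB be a case base containing two precedents c₀ = (s₀, X₀, 0) and c₁ = (s₁, X₁, 1), and suppose there exist reasons Y₀ ⊆ Dfd and Y₁ ⊆ Plt with Y₀ <_{c₁} Y₁ and Y₁ <_{c₀} Y₀. Then no classifier f : 2^Atm₀ → {0,1,?} satisfying two-way monotonicity can simultaneously satisfy f(X₀ ∪ (s₀ ∩ Plt)) = 0 and f(X₁ ∪ (s₁ ∩ Dfd)) = 1: indeed the state Y₀ ∪ Y₁ would be forced to receive both outcomes 0 and 1. -/
variable {α : Type*} [DecidableEq α]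

theorem stmt6 (Plt Dfd : Finset α) (hd : Disjoint Plt Dfd) (CB : CaseBase α)
    (s₀ X₀ s₁ X₁ Y₀ Y₁ : Finset α)
    (hmem0 : (s₀, X₀, false) ∈ CB) (hmem1 : (s₁, X₁, true) ∈ CB)
    (hX₀ : X₀ ⊆ Dfd) (hX₁ : X₁ ⊆ Plt) (hY₀ : Y₀ ⊆ Dfd) (hY₁ : Y₁ ⊆ Plt)
    (h01 : Y₀ ⊆ s₁ ∩ Dfd ∧ X₁ ⊆ Y₁)  -- Y₀ <_{c₁} Y₁
    (h10 : Y₁ ⊆ s₀ ∩ Plt ∧ X₀ ⊆ Y₀)  -- Y₁ <_{c₀} Y₀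
    (f : Finset α → Option Bool) (hmon : TwoMon Plt Dfd f) :
    ¬ (f (X₀ ∪ (s₀ ∩ Plt)) = some false ∧ f (X₁ ∪ (s₁ ∩ Dfd)) = some true) := by
  rintro ⟨h0, h1⟩
  have hf0 : f (Y₀ ∪ Y₁) = some false := by
    apply hmon false X₀ (s₀ ∩ Plt) Y₀ Y₁
    · simpa [side] using hX₀
    · simp [side]
    · exact h0
    · exact h10.2
    · simpa [side] using hY₀
    · exact h10.1
  have hf1 : f (Y₁ ∪ Y₀) = some true := by
    apply hmon true X₁ (s₁ ∩ Dfd) Y₁ Y₀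
    · simpa [side] using hX₁
    · simp [side]
    · exact h1
    · exact h01.2
    · simpa [side] using hY₁
    · exact h01.1
  rw [Finset.union_comm] at hf1
  simp [hf0] at hf1
end

section
/- The classifier f constructed from a consistent case base CB by setting f(s) = x (for x ∈ {0,1}) iff there exists (s', X, x) ∈ CB with X ⊆ s ∩ Atm₀ˣ and s ∩ Atm₀^(x̄) ⊆ s' ∩ Atm₀^(x̄), and f(s) = ? otherwise, satisfies two-way monotonicity: if f(A ∪ B) = x with A ⊆ Atm₀ˣ and B ⊆ Atm₀^(x̄), then f(A' ∪ B') = x for all A' with A ⊆ A' ⊆ Atm₀ˣ and all B' ⊆ B. -/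
variable {α : Type*} [DecidableEq α]

theorem stmt7 (Plt Dfd : Finset α) (hd : Disjoint Plt Dfd) (CB : CaseBase α)
    (hwf : WellFormed Plt Dfd CB) (hcons : Consistent Plt Dfd CB)
    (f : Finset α → Option Bool)
    (hf : ∀ (s : Finset α) (x : Bool), f s = some x ↔ Qualifies Plt Dfd CB s x) :
    TwoMon Plt Dfd f := by
  intro x A B A' B' hA hB hfx hAA' hA' hB'
  rw [hf] at hfx ⊢
  obtain ⟨c, hc, hcx, h1, h2⟩ := hfx
  have hdisj : Disjoint (side Plt Dfd x) (side Plt Dfd (!x)) := by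
    cases x <;> simp [side, hd, hd.symm]
  refine ⟨c, hc, hcx, ?_, ?_⟩
  · intro a ha
    have h := h1 ha
    simp only [Finset.mem_inter, Finset.mem_union] at h ⊢
    obtain ⟨hab, hs⟩ := h
    refine ⟨Or.inl ?_, hs⟩
    rcases hab with h | h
    · exact hAA' h
    · exact absurd hs (Finset.disjoint_left.mp hdisj.symm (hB h))
  · intro a ha
    simp only [Finset.mem_inter, Finset.mem_union] at ha
    obtain ⟨hab, hs⟩ := ha
    rcases hab with h | h
    · exact absurd hs (Finset.disjoint_left.mp hdisj (hA' h))
    · exact h2 (by simp [Finset.mem_inter, Finset.mem_union, hs, Or.inr (hB' h)])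
end

section
/- On the class of classifier models whose state space is all of 2^Atm₀ and which satisfy two-way monotonicity, the relation 'updating a consistent case base CB with a new precedent (s', X, x) preserves consistency' holds if and only if there exists such a classifier f realizing all precedents of CB ∪ {(s', X, x)}, i.e., f(Z ∪ (t ∩ Atm₀^(ȳ))) = y for every (t, Z, y) ∈ CB ∪ {(s', X, x)}. -/
variable {α : Type*} [DecidableEq α]

lemma side_disj (Plt Dfd : Finset α) (hd : Disjoint Plt Dfd) (b : Bool) :
    Disjoint (side Plt Dfd b) (side Plt Dfd (!b)) := by
  cases b <;> simp [side] <;> [exact hd.symm; exact hd]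

lemma not_both {Plt Dfd : Finset α} {CB : CaseBase α}
    (hcons : Consistent Plt Dfd CB) (s : Finset α) (b : Bool)
    (h1 : Qualifies Plt Dfd CB s b) (h2 : Qualifies Plt Dfd CB s (!b)) : False := by
  obtain ⟨c, hc, hcb, hc1, hc2⟩ := h1
  obtain ⟨c', hc', hcb', hc1', hc2'⟩ := h2
  cases b
  · exact hcons ⟨false, s ∩ side Plt Dfd false, s ∩ side Plt Dfd true,
      Finset.inter_subset_right, Finset.inter_subset_right,
      ⟨c, hc, hcb, hc2, hc1⟩, ⟨c', hc', hcb', hc2', hc1'⟩⟩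
  · exact hcons ⟨true, s ∩ side Plt Dfd true, s ∩ side Plt Dfd false,
      Finset.inter_subset_right, Finset.inter_subset_right,
      ⟨c, hc, hcb, hc2, hc1⟩, ⟨c', hc', hcb', hc2', hc1'⟩⟩

lemma cons_of_realizes {Plt Dfd : Finset α} (hd : Disjoint Plt Dfd) {CB : CaseBase α}
    (hwf : WellFormed Plt Dfd CB) {f : Finset α → Option Bool}
    (hmon : TwoMon Plt Dfd f) (hreal : Realizes Plt Dfd f CB) :
    Consistent Plt Dfd CB := by
  rintro ⟨b, Y, Y', hY, hY', ⟨c, hc, hcb, hc1, hc2⟩, ⟨c', hc', hcb', hc1', hc2'⟩⟩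
  have hr := hreal c hc
  have hr' := hreal c' hc'
  rw [hcb] at hr
  rw [hcb'] at hr'
  have hAside : c.2.1 ⊆ side Plt Dfd b := by
    have := (hwf c hc).2
    rw [hcb] at this
    exact this.trans Finset.inter_subset_right
  have hAside' : c'.2.1 ⊆ side Plt Dfd (!b) := by
    have := (hwf c' hc').2
    rw [hcb'] at this
    exact this.trans Finset.inter_subset_right
  have h1 : f (Y ∪ Y') = some b :=
    hmon b c.2.1 (c.1 ∩ side Plt Dfd (!b)) Y Y' hAside
      Finset.inter_subset_right hr hc2 hY hc1
  have h2 : f (Y' ∪ Y) = some (!b) := by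
    refine hmon (!b) c'.2.1 (c'.1 ∩ side Plt Dfd (!!b)) Y' Y hAside'
      Finset.inter_subset_right ?_ hc2' hY' hc1'
    · simpa using hr'
  rw [Finset.union_comm] at h2
  rw [h1] at h2
  cases b <;> simp at h2

lemma realized_of_cons {Plt Dfd : Finset α} (hd : Disjoint Plt Dfd) {CB : CaseBase α}
    (hwf : WellFormed Plt Dfd CB) (hcons : Consistent Plt Dfd CB) :
    ∃ f : Finset α → Option Bool, TwoMon Plt Dfd f ∧ Realizes Plt Dfd f CB := by
  classical
  set f : Finset α → Option Bool := fun s =>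
    if Qualifies Plt Dfd CB s true then some true
    else if Qualifies Plt Dfd CB s false then some false else none with hf
  have hdisj : ∀ (b : Bool) (a : α), a ∈ side Plt Dfd b → a ∈ side Plt Dfd (!b) → False :=
    fun b a h1 h2 => Finset.disjoint_left.mp (side_disj Plt Dfd hd b) h1 h2
  have hfq : ∀ s b, Qualifies Plt Dfd CB s b → f s = some b := by
    intro s b h
    cases b
    · have ht : ¬ Qualifies Plt Dfd CB s true := fun h' => not_both hcons s false h h'
      simp [hf, ht, h]
    · simp [hf, h]
  have hqf : ∀ s b, f s = some b → Qualifies Plt Dfd CB s b := by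
    intro s b h
    simp only [hf] at h
    split_ifs at h with h1 h2
    · cases h; exact h1
    · cases h; exact h2
  refine ⟨f, ?_, ?_⟩
  · intro b A B A' B' hA hB hfAB hAA' hA' hB'B
    obtain ⟨c, hc, hcb, hc1, hc2⟩ := hqf _ _ hfAB
    have e1 : (A ∪ B) ∩ side Plt Dfd b = A := by
      ext a
      simp only [Finset.mem_inter, Finset.mem_union]
      constructor
      · rintro ⟨h1 | h1, h2⟩
        · exact h1
        · exact (hdisj b a h2 (hB h1)).elim
      · intro h1; exact ⟨Or.inl h1, hA h1⟩
    have e2 : (A ∪ B) ∩ side Plt Dfd (!b) = B := by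
      ext a
      simp only [Finset.mem_inter, Finset.mem_union]
      constructor
      · rintro ⟨h1 | h1, h2⟩
        · exact (hdisj b a (hA h1) h2).elim
        · exact h1
      · intro h1; exact ⟨Or.inr h1, hB h1⟩
    apply hfq
    refine ⟨c, hc, hcb, ?_, ?_⟩
    · intro a ha
      have : a ∈ A := e1 ▸ hc1 ha
      exact Finset.mem_inter.mpr ⟨Finset.mem_union_left _ (hAA' this), hA' (hAA' this)⟩
    · intro a ha
      obtain ⟨ha1, ha2⟩ := Finset.mem_inter.mp ha
      have haB : a ∈ B := by
        rcases Finset.mem_union.mp ha1 with h | h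
        · exact (hdisj b a (hA' h) ha2).elim
        · exact hB'B h
      exact hc2 (Finset.mem_inter.mpr ⟨Finset.mem_union_right _ haB, ha2⟩)
  · intro c hc
    apply hfq
    have hX2 := (hwf c hc).2
    refine ⟨c, hc, rfl, ?_, ?_⟩
    · intro a ha
      exact Finset.mem_inter.mpr ⟨Finset.mem_union_left _ ha,
        (hX2.trans Finset.inter_subset_right) ha⟩
    · intro a ha
      obtain ⟨ha1, ha2⟩ := Finset.mem_inter.mp ha
      rcases Finset.mem_union.mp ha1 with h | h
      · exact (hdisj c.2.2 a ((hX2.trans Finset.inter_subset_right) h) ha2).elim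
      · exact h

theorem stmt8 (Plt Dfd : Finset α) (hd : Disjoint Plt Dfd) (CB : CaseBase α)
    (hwf : WellFormed Plt Dfd CB) (hcons : Consistent Plt Dfd CB)
    (s' X : Finset α) (x : Bool) (hs' : s' ⊆ Plt ∪ Dfd)
    (hX : X ⊆ s' ∩ side Plt Dfd x) :
    Consistent Plt Dfd (CB ∪ {(s', X, x)}) ↔
      ∃ f : Finset α → Option Bool, TwoMon Plt Dfd f ∧
        Realizes Plt Dfd f (CB ∪ {(s', X, x)}) := by
  have hwf' : WellFormed Plt Dfd (CB ∪ {(s', X, x)}) := by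
    rintro c (hc | hc)
    · exact hwf c hc
    · rw [Set.mem_singleton_iff] at hc
      subst hc
      exact ⟨hs', hX⟩
  constructor
  · intro hcons'
    exact realized_of_cons hd hwf' hcons'
  · rintro ⟨f, hmon, hreal⟩
    exact cons_of_realizes hd hwf' hmon hreal
end

section
/- Let f : 2^Atm₀ → {0,1,?} satisfy two-way monotonicity and let CB be a consistent case base realized by f (f(X ∪ (s ∩ Atm₀^(x̄))) = x for all (s, X, x) ∈ CB). Then for every precedent (s, X, x) ∈ CB with X ⊆ s, there exists a 'term' given by a pair (P, N) of disjoint subsets of Atm₀ with P = X, such that every fact situation t with P ⊆ t and t ∩ N = ∅ has f(t) = x, and the term is true at s (P ⊆ s and s ∩ N = ∅). That is, the reason X of any precedent is the positive part of some weak abductive explanation of the outcome at s. -/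
variable {α : Type*} [DecidableEq α]

theorem stmt9 (Plt Dfd : Finset α) (hd : Disjoint Plt Dfd) (CB : CaseBase α)
    (hwf : WellFormed Plt Dfd CB) (hcons : Consistent Plt Dfd CB)
    (f : Finset α → Option Bool) (hmon : TwoMon Plt Dfd f)
    (hreal : Realizes Plt Dfd f CB) :
    ∀ c ∈ CB, c.2.1 ⊆ c.1 →
      ∃ N : Finset α, N ⊆ Plt ∪ Dfd ∧ Disjoint c.2.1 N ∧
        -- the term (c.2.1, N) is an implicant for the outcome c.2.2
        (∀ t : Finset α, t ⊆ Plt ∪ Dfd → c.2.1 ⊆ t → Disjoint t N →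
          f t = some c.2.2) ∧
        -- and it holds at the fact situation c.1
        c.2.1 ⊆ c.1 ∧ Disjoint c.1 N := by
  rintro ⟨s, X, x⟩ hc hXs
  simp only at *
  obtain ⟨hsA, hX⟩ := hwf _ hc
  have hside : Disjoint (side Plt Dfd x) (side Plt Dfd (!x)) := by
    cases x <;> simp [side, hd, hd.symm]
  have hXside : X ⊆ side Plt Dfd x := hX.trans Finset.inter_subset_right
  refine ⟨side Plt Dfd (!x) \ s, ?_, ?_, ?_, hXs, Finset.sdiff_disjoint.symm⟩
  · refine (Finset.sdiff_subset).trans ?_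
    cases x <;> simp [side]
  · exact (hside.mono_left hXside).mono_right Finset.sdiff_subset
  · intro t ht hXt htN
    have hcover : Plt ∪ Dfd = side Plt Dfd x ∪ side Plt Dfd (!x) := by
      cases x <;> simp [side, Finset.union_comm]
    have ht' : t = (t ∩ side Plt Dfd x) ∪ (t ∩ side Plt Dfd (!x)) := by
      rw [← Finset.inter_union_distrib_left, ← hcover,
        Finset.inter_eq_left.mpr ht]
    rw [ht']
    refine hmon x X (s ∩ side Plt Dfd (!x)) _ _ hXside Finset.inter_subset_right
      (hreal _ hc) (Finset.subset_inter hXt hXside) Finset.inter_subset_right ?_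
    intro a ha
    simp only [Finset.mem_inter] at ha ⊢
    refine ⟨?_, ha.2⟩
    by_contra hns
    exact (Finset.disjoint_left.mp htN) ha.1 (Finset.mem_sdiff.mpr ⟨ha.2, hns⟩)
end

section
/- Let f : 2^Atm₀ → {0,1,?} satisfy two-way monotonicity, and let (s, X, x) be a precedent with X ⊆ s and f(X ∪ (s ∩ Atm₀^(x̄))) = x. Then the specific term with positive part X and negative part Atm₀^(x̄) \ s is a weak abductive explanation of x at s: it holds at s, and every fact situation t with X ⊆ t and t ∩ (Atm₀^(x̄) \ s) = ∅ satisfies f(t) = x. -/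
variable {α : Type*} [DecidableEq α]

theorem stmt10 (Plt Dfd : Finset α) (hd : Disjoint Plt Dfd)
    (f : Finset α → Option Bool) (hmon : TwoMon Plt Dfd f)
    (s X : Finset α) (x : Bool) (hs : s ⊆ Plt ∪ Dfd)
    (hX : X ⊆ side Plt Dfd x) (hXs : X ⊆ s)
    (hf : f (X ∪ (s ∩ side Plt Dfd (!x))) = some x) :
    (X ⊆ s ∧ Disjoint s (side Plt Dfd (!x) \ s)) ∧
      ∀ t : Finset α, t ⊆ Plt ∪ Dfd → X ⊆ t →
        Disjoint t (side Plt Dfd (!x) \ s) → f t = some x := by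
  refine ⟨⟨hXs, Finset.disjoint_sdiff⟩, fun t ht hXt hdis => ?_⟩
  have hB' : t ∩ side Plt Dfd (!x) ⊆ s ∩ side Plt Dfd (!x) := by
    intro a ha
    simp only [Finset.mem_inter] at ha ⊢
    refine ⟨?_, ha.2⟩
    by_contra h
    exact (Finset.disjoint_left.mp hdis ha.1) (Finset.mem_sdiff.mpr ⟨ha.2, h⟩)
  have hsplit : t = (t ∩ side Plt Dfd x) ∪ (t ∩ side Plt Dfd (!x)) := by
    ext a
    simp only [Finset.mem_union, Finset.mem_inter]
    constructor
    · intro hat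
      rcases Finset.mem_union.mp (ht hat) with h | h
      · cases x with
        | true => exact Or.inl ⟨hat, by simpa [side] using h⟩
        | false => exact Or.inr ⟨hat, by simpa [side] using h⟩
      · cases x with
        | true => exact Or.inr ⟨hat, by simpa [side] using h⟩
        | false => exact Or.inl ⟨hat, by simpa [side] using h⟩
    · rintro (h | h) <;> exact h.1
  rw [hsplit]
  apply hmon x X (s ∩ side Plt Dfd (!x)) (t ∩ side Plt Dfd x) (t ∩ side Plt Dfd (!x))
    hX Finset.inter_subset_right hf
    (Finset.subset_inter hXt hX) Finset.inter_subset_right hB'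
end

section
/- If a case base CB is inconsistent, then for every total classifier f : 2^Atm₀ → {0,1,?} satisfying two-way monotonicity there exists a precedent (s, X, x) ∈ CB with f(X ∪ (s ∩ Atm₀^(x̄))) ≠ x. -/
variable {α : Type*} [DecidableEq α]

theorem stmt11 (Plt Dfd : Finset α) (hd : Disjoint Plt Dfd) (CB : CaseBase α)
    (hwf : WellFormed Plt Dfd CB) (hinc : ¬ Consistent Plt Dfd CB) :
    ∀ f : Finset α → Option Bool, TwoMon Plt Dfd f →
      ∃ c ∈ CB, f (c.2.1 ∪ (c.1 ∩ side Plt Dfd (!c.2.2))) ≠ some c.2.2 := by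
  intro f hmon
  by_contra h
  push_neg at h
  apply hinc
  rintro ⟨x, Y, Y', hY, hY', ⟨c, hc, hcx, hY'c, hcX⟩, ⟨d, hdCB, hdx, hYd, hdX⟩⟩
  have hfc := h c hc
  have hfd := h d hdCB
  rw [hcx] at hfc
  rw [hdx] at hfd
  have hcwf := (hwf c hc).2
  have hdwf := (hwf d hdCB).2
  rw [hcx] at hcwf
  rw [hdx] at hdwf
  have hcX' : c.2.1 ⊆ side Plt Dfd x := hcwf.trans Finset.inter_subset_right
  have hdX' : d.2.1 ⊆ side Plt Dfd (!x) := hdwf.trans Finset.inter_subset_right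
  have h1 : f (Y ∪ Y') = some x :=
    hmon x c.2.1 (c.1 ∩ side Plt Dfd (!x)) Y Y' hcX' Finset.inter_subset_right
      hfc hcX hY hY'c
  simp only [Bool.not_not] at hfd hYd
  have h2 : f (Y' ∪ Y) = some (!x) := by
    have := hmon (!x) d.2.1 (d.1 ∩ side Plt Dfd (!(!x))) Y' Y hdX'
      Finset.inter_subset_right ?_ hdX ?_ ?_
    · exact this
    · rw [Bool.not_not]; exact hfd
    · exact hY'
    · rw [Bool.not_not]; exact hYd
  rw [Finset.union_comm, h1] at h2
  simp at h2
end

section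
/- Let f : 2^Atm₀ → {0,1,?} satisfy two-way monotonicity and suppose f(s) = x for some s ⊆ Atm₀ and x ∈ {0,1}. Then there exists a term (P, N) with P ⊆ s ∩ Atm₀ˣ and N ⊆ Atm₀^(x̄) \ s that is an implicant for x (every state t with P ⊆ t, t ∩ N = ∅ has f(t) = x); in particular the positive part consists only of pro-factors for x present in s. -/
variable {α : Type*} [DecidableEq α]

theorem stmt13 (Plt Dfd : Finset α) (hd : Disjoint Plt Dfd)
    (f : Finset α → Option Bool) (hmon : TwoMon Plt Dfd f)
    (s : Finset α) (x : Bool) (hs : s ⊆ Plt ∪ Dfd) (hf : f s = some x) :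
    ∃ P N : Finset α, P ⊆ s ∩ side Plt Dfd x ∧ N ⊆ side Plt Dfd (!x) \ s ∧
      Disjoint P N ∧
      ∀ t : Finset α, t ⊆ Plt ∪ Dfd → P ⊆ t → Disjoint t N → f t = some x := by
  have hunion : ∀ u : Finset α, u ⊆ Plt ∪ Dfd →
      u ∩ side Plt Dfd x ∪ u ∩ side Plt Dfd (!x) = u := by
    intro u hu
    rw [← Finset.inter_union_distrib_left]
    refine Finset.inter_eq_left.2 fun a ha => ?_
    have h2 := hu ha
    cases x <;> simp only [side, Bool.not_true, Bool.not_false, if_true, if_false,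
      Finset.mem_union] at h2 ⊢ <;> tauto
  refine ⟨s ∩ side Plt Dfd x, side Plt Dfd (!x) \ s, le_refl _, le_refl _, ?_, ?_⟩
  · refine Finset.disjoint_left.2 fun a ha hb => ?_
    simp only [Finset.mem_inter, Finset.mem_sdiff] at ha hb
    exact hb.2 ha.1
  · intro t ht hPt hdisj
    have hB' : t ∩ side Plt Dfd (!x) ⊆ s ∩ side Plt Dfd (!x) := by
      intro a ha
      simp only [Finset.mem_inter] at ha ⊢
      refine ⟨?_, ha.2⟩
      by_contra hns
      exact (Finset.disjoint_left.1 hdisj ha.1) (Finset.mem_sdiff.2 ⟨ha.2, hns⟩)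
    have := hmon x (s ∩ side Plt Dfd x) (s ∩ side Plt Dfd (!x))
      (t ∩ side Plt Dfd x) (t ∩ side Plt Dfd (!x))
      (Finset.inter_subset_right) (Finset.inter_subset_right)
      (by rw [hunion s hs]; exact hf)
      (fun a ha => Finset.mem_inter.2 ⟨hPt ha, (Finset.mem_inter.1 ha).2⟩)
      Finset.inter_subset_right hB'
    rwa [hunion t ht] at this
end

section
/- Let CB be a consistent case base and let (s₃, X, x) be a new case such that X <_CB-dominates all opposing reasons applicable in s₃, i.e., s₃ ∩ Atm₀^(x̄) <_CB X' for some X' ⊆ X ⊆ s₃ ∩ Atm₀ˣ. Then updating with the opposite outcome violates precedential constraint: CB ∪ {(s₃, Y, x̄)} is inconsistent for every reason Y ⊆ s₃ ∩ Atm₀^(x̄). -/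
variable {α : Type*} [DecidableEq α]

theorem stmt18 (Plt Dfd : Finset α) (hd : Disjoint Plt Dfd) (CB : CaseBase α)
    (hwf : WellFormed Plt Dfd CB) (hcons : Consistent Plt Dfd CB)
    (s₃ X : Finset α) (x : Bool) (hs₃ : s₃ ⊆ Plt ∪ Dfd)
    (hX : X ⊆ s₃ ∩ side Plt Dfd x)
    (hdom : ∃ X' : Finset α, X' ⊆ X ∧ prefLt Plt Dfd CB x (s₃ ∩ side Plt Dfd (!x)) X') :
    ∀ Y : Finset α, Y ⊆ s₃ ∩ side Plt Dfd (!x) →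
      ¬ Consistent Plt Dfd (CB ∪ {(s₃, Y, !x)}) := by
  intro Y hY hcons'
  obtain ⟨X', hX'X, c, hc, hcx, hsub, hcr⟩ := hdom
  apply hcons'
  refine ⟨x, X, s₃ ∩ side Plt Dfd (!x), fun a ha => (Finset.mem_inter.mp (hX ha)).2,
    Finset.inter_subset_right, ⟨c, Or.inl hc, hcx, hsub, hcr.trans hX'X⟩, ?_⟩
  exact ⟨(s₃, Y, !x), Or.inr rfl, rfl, by simpa [Bool.not_not] using hX, hY⟩
end
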